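/- Let B = (b_{i1...im}) be a symmetric quasi-double B-tensor of even order m and dimension n ≥ 2. Then every H-eigenvalue of B is positive. -/

import Mathlib

open Finset

/-- The set of index tuples `(i, i₂, …, i_m)` in row `i` of an order-`m`, dimension-`n`
tensor, i.e. all tuples whose first index is `i`. -/
def rowSet (m n : ℕ) (i : Fin n) : Finset (Fin m → Fin n) :=
  Finset.univ.filter fun α => ∀ t : Fin m, (t : ℕ) = 0 → α t = i

/-- The set of off-diagonal index tuples in row `i`: tuples whose first index is `i`
and whose indices are not all equal to `i` (i.e. `δ_{i i₂ … i_m} = 0`). -/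
def offRowSet (m n : ℕ) (i : Fin n) : Finset (Fin m → Fin n) :=
  Finset.univ.filter fun α => (∀ t : Fin m, (t : ℕ) = 0 → α t = i) ∧ α ≠ fun _ => i

/-- The diagonal entry `b_{i…i}`. -/
def diagEntry {m n : ℕ} (B : (Fin m → Fin n) → ℝ) (i : Fin n) : ℝ :=
  B fun _ => i

/-- `β_i(B) = max {0, b_{i j₂ ⋯ j_m} : δ_{i j₂ … j_m} = 0}`. -/
def betaMax {m n : ℕ} (B : (Fin m → Fin n) → ℝ) (i : Fin n) : ℝ :=
  (offRowSet m n i).fold max 0 B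

/-- `Δ_i(B) = Σ_{δ_{i i₂…i_m} = 0} (β_i(B) - b_{i i₂ ⋯ i_m})`. -/
def DeltaSum {m n : ℕ} (B : (Fin m → Fin n) → ℝ) (i : Fin n) : ℝ :=
  ∑ α ∈ offRowSet m n i, (betaMax B i - B α)

/-- `r_i(B) = Σ_{δ_{i i₂…i_m} = 0} |b_{i i₂ ⋯ i_m}|`. -/
def rowAbsSum {m n : ℕ} (B : (Fin m → Fin n) → ℝ) (i : Fin n) : ℝ :=
  ∑ α ∈ offRowSet m n i, |B α|

/-- The index tuple `(j, i, i, …, i)`. -/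
def spike (m n : ℕ) (j i : Fin n) : Fin m → Fin n :=
  fun t => if (t : ℕ) = 0 then j else i

/-- `Δ_j^i(B) = Δ_j(B) - (β_j(B) - b_{j i⋯i})`. -/
def DeltaSubSum {m n : ℕ} (B : (Fin m → Fin n) → ℝ) (j i : Fin n) : ℝ :=
  DeltaSum B j - (betaMax B j - B (spike m n j i))

/-- `r_j^i(B) = r_j(B) - |b_{j i⋯i}|`. -/
def rowAbsSubSum {m n : ℕ} (B : (Fin m → Fin n) → ℝ) (j i : Fin n) : ℝ :=
  rowAbsSum B j - |B (spike m n j i)|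

/-- `B` is a B-tensor: each row sum is positive and `(1/n^{m-1})` times the row sum
strictly dominates every off-diagonal entry of that row. -/
def IsBTensor {m n : ℕ} (B : (Fin m → Fin n) → ℝ) : Prop :=
  ∀ i : Fin n,
    0 < ∑ α ∈ rowSet m n i, B α ∧
    ∀ α ∈ offRowSet m n i,
      B α < (1 / (n : ℝ) ^ (m - 1)) * ∑ α' ∈ rowSet m n i, B α'

/-- `B` is a double B-tensor. -/
def IsDoubleBTensor {m n : ℕ} (B : (Fin m → Fin n) → ℝ) : Prop :=
  (∀ i, betaMax B i < diagEntry B i) ∧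
  (∀ i, DeltaSum B i ≤ diagEntry B i - betaMax B i) ∧
  (∀ i j, i ≠ j →
    DeltaSum B i * DeltaSum B j <
      (diagEntry B i - betaMax B i) * (diagEntry B j - betaMax B j))

/-- `B` is a quasi-double B-tensor. -/
def IsQuasiDoubleBTensor {m n : ℕ} (B : (Fin m → Fin n) → ℝ) : Prop :=
  (∀ i, betaMax B i < diagEntry B i) ∧
  ∀ i j, i ≠ j →
    (betaMax B j - B (spike m n j i)) * DeltaSum B i <
      (diagEntry B i - betaMax B i) *
        (diagEntry B j - betaMax B j - DeltaSubSum B j i)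

/-- `B` is a Z-tensor: all off-diagonal entries are non-positive. -/
def IsZTensor {m n : ℕ} (B : (Fin m → Fin n) → ℝ) : Prop :=
  ∀ α : Fin m → Fin n, (∃ s t, α s ≠ α t) → B α ≤ 0

/-- `B` is a symmetric tensor: invariant under permutations of the indices. -/
def IsSymmetricTensor {m n : ℕ} (B : (Fin m → Fin n) → ℝ) : Prop :=
  ∀ (σ : Equiv.Perm (Fin m)) (α : Fin m → Fin n), B (α ∘ σ) = B α

/-- `B` is doubly strictly diagonally dominant (for order `m > 2`). -/
def IsDSDD {m n : ℕ} (B : (Fin m → Fin n) → ℝ) : Prop :=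
  (∀ i, rowAbsSum B i ≤ |diagEntry B i|) ∧
  (∀ i j, i ≠ j → rowAbsSum B i * rowAbsSum B j < |diagEntry B i| * |diagEntry B j|)

/-- `B` is quasi-doubly strictly diagonally dominant. -/
def IsQDSDD {m n : ℕ} (B : (Fin m → Fin n) → ℝ) : Prop :=
  ∀ i j, i ≠ j →
    rowAbsSum B i * |B (spike m n j i)| <
      |diagEntry B i| * (|diagEntry B j| - rowAbsSubSum B j i)

/-- `B x^m = Σ b_{i₁⋯i_m} x_{i₁} ⋯ x_{i_m}`. -/
def tensorApply {m n : ℕ} (B : (Fin m → Fin n) → ℝ) (x : Fin n → ℝ) : ℝ :=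
  ∑ α : Fin m → Fin n, B α * ∏ t, x (α t)

/-- `B` is positive definite: `B x^m > 0` for every nonzero `x ∈ ℝ^n`. -/
def IsPosDefTensor {m n : ℕ} (B : (Fin m → Fin n) → ℝ) : Prop :=
  ∀ x : Fin n → ℝ, x ≠ 0 → 0 < tensorApply B x

/-- `(B x^{m-1})_i = Σ_{i₂,…,i_m} b_{i i₂ ⋯ i_m} x_{i₂} ⋯ x_{i_m}`. -/
def rowApply {m n : ℕ} (B : (Fin m → Fin n) → ℝ) (x : Fin n → ℝ) (i : Fin n) : ℝ :=
  ∑ α ∈ rowSet m n i, B α * ∏ t ∈ Finset.univ.filter (fun t : Fin m => (t : ℕ) ≠ 0), x (α t)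

/-- `B` is a P-tensor: for every nonzero `x`, `max_i x_i (B x^{m-1})_i > 0`. -/
def IsPTensor {m n : ℕ} (B : (Fin m → Fin n) → ℝ) : Prop :=
  ∀ x : Fin n → ℝ, x ≠ 0 → ∃ i, 0 < x i * rowApply B x i

/-- `lam` is an H-eigenvalue of `B`. -/
def IsHEigenvalue {m n : ℕ} (B : (Fin m → Fin n) → ℝ) (lam : ℝ) : Prop :=
  ∃ x : Fin n → ℝ, x ≠ 0 ∧ ∀ i, rowApply B x i = lam * x i ^ (m - 1)

/-- The partially all one tensor `ε^J`: entry `1` if all indices lie in `J`, else `0`. -/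
def epsTensor (m n : ℕ) (J : Finset (Fin n)) : (Fin m → Fin n) → ℝ :=
  fun α => if ∀ t, α t ∈ J then 1 else 0

section Aux

open Finset

variable {m n : ℕ} {B : (Fin m → Fin n) → ℝ} {i j : Fin n}

lemma mem_rowSet {α : Fin m → Fin n} :
    α ∈ rowSet m n i ↔ ∀ t : Fin m, (t : ℕ) = 0 → α t = i := by
  simp [rowSet]

lemma mem_offRowSet {α : Fin m → Fin n} :
    α ∈ offRowSet m n i ↔ (∀ t : Fin m, (t : ℕ) = 0 → α t = i) ∧ α ≠ fun _ => i := by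
  simp [offRowSet]

lemma const_mem_rowSet : (fun _ => i) ∈ rowSet m n i := by simp [mem_rowSet]

lemma const_not_mem_offRowSet : (fun _ => i) ∉ offRowSet m n i := by
  simp [mem_offRowSet]

lemma offRowSet_eq_erase : offRowSet m n i = (rowSet m n i).erase (fun _ => i) := by
  ext α
  simp only [mem_offRowSet, mem_rowSet, Finset.mem_erase]
  tauto

lemma rowSet_eq_insert : rowSet m n i = insert (fun _ => i) (offRowSet m n i) := by
  rw [offRowSet_eq_erase, Finset.insert_erase const_mem_rowSet]

lemma betaMax_nonneg : 0 ≤ betaMax B i := by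
  rw [betaMax, Finset.le_fold_max]; exact Or.inl le_rfl

lemma le_betaMax {α : Fin m → Fin n} (hα : α ∈ offRowSet m n i) : B α ≤ betaMax B i := by
  rw [betaMax, Finset.le_fold_max]; exact Or.inr ⟨α, hα, le_rfl⟩

lemma betaMax_le {c : ℝ} (h0 : 0 ≤ c) (h : ∀ α ∈ offRowSet m n i, B α ≤ c) :
    betaMax B i ≤ c := by
  rw [betaMax, Finset.fold_max_le]; exact ⟨h0, h⟩

lemma exists_betaMax (h : 0 < betaMax B i) :
    ∃ α ∈ offRowSet m n i, B α = betaMax B i := by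
  have := (Finset.le_fold_max (f := B) (b := (0:ℝ)) (s := offRowSet m n i)
    (betaMax B i)).1 le_rfl
  rcases this with h0 | ⟨α, hα, hle⟩
  · linarith
  · exact ⟨α, hα, le_antisymm (le_betaMax hα) hle⟩

lemma DeltaSum_nonneg : 0 ≤ DeltaSum B i :=
  Finset.sum_nonneg fun α hα => sub_nonneg.2 (le_betaMax hα)

lemma spike_mem_offRowSet (hm2 : 2 ≤ m) (hij : j ≠ i) :
    spike m n j i ∈ offRowSet m n j := by
  rw [mem_offRowSet]
  constructor
  · intro t ht; simp [spike, ht]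
  · intro h
    have := congrFun h ⟨1, by omega⟩
    simp [spike] at this
    exact hij this.symm

lemma DeltaSubSum_eq (hm2 : 2 ≤ m) (hij : i ≠ j) :
    DeltaSubSum B j i
      = ∑ α ∈ (offRowSet m n j).erase (spike m n j i), (betaMax B j - B α) := by
  have hsp : spike m n j i ∈ offRowSet m n j := spike_mem_offRowSet hm2 (Ne.symm hij)
  have h2 : ∑ α ∈ (offRowSet m n j).erase (spike m n j i), (betaMax B j - B α)
      + (betaMax B j - B (spike m n j i)) = DeltaSum B j :=
    Finset.sum_erase_add (offRowSet m n j) (fun α => betaMax B j - B α) hsp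
  rw [DeltaSubSum]
  linarith

lemma DeltaSubSum_nonneg (hm2 : 2 ≤ m) (hij : i ≠ j) : 0 ≤ DeltaSubSum B j i := by
  rw [DeltaSubSum_eq hm2 hij]
  exact Finset.sum_nonneg fun α hα =>
    sub_nonneg.2 (le_betaMax (Finset.mem_of_mem_erase hα))

lemma spikeTerm_nonneg (hm2 : 2 ≤ m) (hij : i ≠ j) :
    0 ≤ betaMax B j - B (spike m n j i) :=
  sub_nonneg.2 (le_betaMax (spike_mem_offRowSet hm2 (Ne.symm hij)))

/-- In a quasi-double B-tensor the second factor on the right is positive. -/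
lemma qdb_second_pos (hm2 : 2 ≤ m) (hB : IsQuasiDoubleBTensor B) (hij : i ≠ j) :
    0 < diagEntry B j - betaMax B j - DeltaSubSum B j i := by
  have h := hB.2 i j hij
  have h1 : 0 ≤ (betaMax B j - B (spike m n j i)) * DeltaSum B i :=
    mul_nonneg (spikeTerm_nonneg hm2 hij) DeltaSum_nonneg
  have h2 : 0 < diagEntry B i - betaMax B i := sub_pos.2 (hB.1 i)
  nlinarith

end Aux
section Aux2

open Finset

variable {m n : ℕ} {B : (Fin m → Fin n) → ℝ} {x : Fin n → ℝ} {i j : Fin n}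

lemma filter_ne_zero_eq_erase (hm : 0 < m) :
    univ.filter (fun t : Fin m => (t : ℕ) ≠ 0) = univ.erase ⟨0, hm⟩ := by
  ext t
  simp only [Finset.mem_filter, Finset.mem_erase, Finset.mem_univ, true_and, and_true]
  constructor
  · intro h ht; exact h (by simp [ht])
  · intro h ht; exact h (Fin.ext ht)

lemma card_filter_ne_zero (hm : 0 < m) :
    (univ.filter (fun t : Fin m => (t : ℕ) ≠ 0)).card = m - 1 := by
  rw [filter_ne_zero_eq_erase hm, Finset.card_erase_of_mem (Finset.mem_univ _),
    Finset.card_univ, Fintype.card_fin]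

lemma prod_split (hm : 0 < m) (α : Fin m → Fin n) :
    ∏ t, x (α t)
      = x (α ⟨0, hm⟩) * ∏ t ∈ univ.filter (fun t : Fin m => (t : ℕ) ≠ 0), x (α t) := by
  rw [filter_ne_zero_eq_erase hm]
  exact (Finset.mul_prod_erase univ (fun t => x (α t)) (Finset.mem_univ _)).symm

lemma rowSet_eq_filter (hm : 0 < m) :
    rowSet m n i = univ.filter fun α : Fin m → Fin n => α ⟨0, hm⟩ = i := by
  ext α
  simp only [mem_rowSet, Finset.mem_filter, Finset.mem_univ, true_and]
  constructor
  · intro h; exact h _ rfl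
  · intro h t ht; rwa [show t = ⟨0, hm⟩ from Fin.ext ht]

lemma tailProd_const (hm : 0 < m) (c : ℝ) :
    ∏ _t ∈ univ.filter (fun t : Fin m => (t : ℕ) ≠ 0), c = c ^ (m - 1) := by
  rw [Finset.prod_const, card_filter_ne_zero hm]

lemma tailProd_spike (hm : 0 < m) (hij : j ≠ i) :
    ∏ t ∈ univ.filter (fun t : Fin m => (t : ℕ) ≠ 0), x (spike m n j i t)
      = x i ^ (m - 1) := by
  rw [← tailProd_const hm (x i)]
  refine Finset.prod_congr rfl fun t ht => ?_
  have : (t : ℕ) ≠ 0 := (Finset.mem_filter.1 ht).2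
  simp [spike, this]

lemma sum_mul_rowApply (hm : 0 < m) :
    ∑ i, x i * rowApply B x i = tensorApply B x := by
  rw [tensorApply,
    ← Finset.sum_fiberwise univ (fun α : Fin m → Fin n => α ⟨0, hm⟩)
      (fun α => B α * ∏ t, x (α t))]
  refine Finset.sum_congr rfl fun j _ => ?_
  rw [rowApply, Finset.mul_sum, rowSet_eq_filter hm]
  refine Finset.sum_congr rfl fun α hα => ?_
  have hz : α ⟨0, hm⟩ = j := by
    simpa using (Finset.mem_filter.1 hα).2
  rw [prod_split hm, hz]; ring

lemma rowApply_decomp (hm : 0 < m) :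
    rowApply B x i = diagEntry B i * x i ^ (m - 1)
      + ∑ α ∈ offRowSet m n i,
          B α * ∏ t ∈ univ.filter (fun t : Fin m => (t : ℕ) ≠ 0), x (α t) := by
  rw [rowApply, rowSet_eq_insert, Finset.sum_insert const_not_mem_offRowSet,
    diagEntry, tailProd_const hm]

lemma tensorApply_smul (c : ℝ) : tensorApply B (c • x) = c ^ m * tensorApply B x := by
  rw [tensorApply, tensorApply, Finset.mul_sum]
  refine Finset.sum_congr rfl fun α _ => ?_
  have : ∏ t, (c • x) (α t) = c ^ m * ∏ t, x (α t) := by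
    simp only [Pi.smul_apply, smul_eq_mul]
    rw [Finset.prod_mul_distrib, Finset.prod_const, Finset.card_univ, Fintype.card_fin]
  rw [this]; ring

lemma sum_eps_prod (J : Finset (Fin n)) :
    ∑ α : Fin m → Fin n, epsTensor m n J α * ∏ t, x (α t)
      = (∑ k ∈ J, x k) ^ m := by
  classical
  have h1 : ∑ α : Fin m → Fin n, epsTensor m n J α * ∏ t, x (α t)
      = ∑ α ∈ univ.filter (fun α : Fin m → Fin n => ∀ t, α t ∈ J), ∏ t, x (α t) := by
    rw [Finset.sum_filter]
    refine Finset.sum_congr rfl fun α _ => ?_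
    by_cases h : ∀ t, α t ∈ J <;> simp [epsTensor, h]
  have h2 : univ.filter (fun α : Fin m → Fin n => ∀ t, α t ∈ J)
      = Fintype.piFinset (fun _ : Fin m => J) := by
    ext α; simp [Fintype.mem_piFinset]
  rw [h1, h2, ← Finset.prod_univ_sum, Finset.prod_const, Finset.card_univ, Fintype.card_fin]

lemma tensorApply_add_eps (J : Finset (Fin n)) (c : ℝ) :
    tensorApply (fun α => B α + c * epsTensor m n J α) x
      = tensorApply B x + c * (∑ k ∈ J, x k) ^ m := by
  rw [tensorApply, tensorApply, ← sum_eps_prod (x := x) J, Finset.mul_sum,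
    ← Finset.sum_add_distrib]
  refine Finset.sum_congr rfl fun α _ => by ring

lemma sum_pow_pos (hm : 0 < m) (hme : Even m) (hx : x ≠ 0) : 0 < ∑ k, x k ^ m := by
  obtain ⟨k, hk⟩ : ∃ k, x k ≠ 0 := by
    by_contra h; push_neg at h; exact hx (funext h)
  refine Finset.sum_pos' (fun k _ => hme.pow_nonneg _) ⟨k, Finset.mem_univ _, ?_⟩
  exact hme.pow_pos hk

end Aux2
section ZCase

open Finset

/-- Every H-eigenvalue of a quasi-double B-tensor all of whose off-diagonal
entries are nonpositive is positive. -/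
lemma zcase {m n : ℕ} (hm2 : 2 ≤ m) {B : (Fin m → Fin n) → ℝ}
    (hB : IsQuasiDoubleBTensor B)
    (hzr : ∀ i : Fin n, ∀ α ∈ offRowSet m n i, B α ≤ 0) :
    ∀ lam : ℝ, IsHEigenvalue B lam → 0 < lam := by
  intro lam hlam
  by_contra hpos
  push_neg at hpos
  obtain ⟨x, hx, heig⟩ := hlam
  have hm : 0 < m := by omega
  have hbeta : ∀ i, betaMax B i = 0 := fun i =>
    le_antisymm (betaMax_le le_rfl (hzr i)) betaMax_nonneg
  have hd : ∀ i, 0 < diagEntry B i := fun i => by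
    have := hB.1 i; rw [hbeta i] at this; exact this
  set P : (Fin m → Fin n) → ℝ :=
    fun α => ∏ t ∈ univ.filter (fun t : Fin m => (t : ℕ) ≠ 0), x (α t) with hP
  have hoff : ∀ i, (∑ α ∈ offRowSet m n i, B α * P α)
      = (lam - diagEntry B i) * x i ^ (m - 1) := by
    intro i
    have h1 := heig i
    rw [rowApply_decomp hm] at h1
    rw [hP]; linarith
  -- the max-modulus index
  have hnem : Nonempty (Fin n) := by
    by_contra h'
    exact hx (funext fun k => ((h' ⟨k⟩).elim))
  obtain ⟨p, -, hp⟩ := Finset.exists_max_image univ (fun k => |x k|) univ_nonempty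
  have hp' : ∀ k, |x k| ≤ |x p| := fun k => hp k (mem_univ k)
  have hxp : x p ≠ 0 := by
    intro h0
    apply hx
    funext k
    have := hp' k
    rw [h0, abs_zero] at this
    exact abs_nonpos_iff.1 this
  set A : ℝ := |x p| ^ (m - 1) with hA
  have hA0 : 0 < A := pow_pos (abs_pos.2 hxp) _
  have htp : ∀ α : Fin m → Fin n, |P α| ≤ A := by
    intro α
    rw [hP, hA]
    simp only
    rw [Finset.abs_prod]
    calc ∏ t ∈ univ.filter (fun t : Fin m => (t : ℕ) ≠ 0), |x (α t)|
        ≤ ∏ _t ∈ univ.filter (fun t : Fin m => (t : ℕ) ≠ 0), |x p| :=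
          Finset.prod_le_prod (fun _ _ => abs_nonneg _) (fun t _ => hp' (α t))
      _ = |x p| ^ (m - 1) := tailProd_const hm _
  have habsB : ∀ (i : Fin n), ∀ α ∈ offRowSet m n i, |B α| = betaMax B i - B α := by
    intro i α hα
    rw [hbeta i, abs_of_nonpos (hzr i α hα)]; ring
  by_cases hcase : ∀ q, q ≠ p → x q = 0
  · -- all mass on p : lam = d p > 0, contradiction
    have hzero : ∑ α ∈ offRowSet m n p, B α * P α = 0 := by
      refine Finset.sum_eq_zero fun α hα => ?_
      obtain ⟨h1, h2⟩ := mem_offRowSet.1 hα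
      obtain ⟨t, ht⟩ : ∃ t, α t ≠ p := by
        by_contra h; push_neg at h; exact h2 (funext h)
      have ht0 : (t : ℕ) ≠ 0 := fun h => ht (h1 t h)
      have : P α = 0 := by
        rw [hP]
        exact Finset.prod_eq_zero (Finset.mem_filter.2 ⟨mem_univ t, ht0⟩)
          (hcase (α t) ht)
      rw [this, mul_zero]
    have h1 := hoff p
    rw [hzero] at h1
    have hxpm : x p ^ (m - 1) ≠ 0 := pow_ne_zero _ hxp
    have : lam - diagEntry B p = 0 := by
      rcases mul_eq_zero.1 h1.symm with h | h
      · exact h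
      · exact absurd h hxpm
    have := hd p
    linarith
  · push_neg at hcase
    obtain ⟨q, hqp, hxq⟩ := hcase
    set Bq : ℝ := |x q| ^ (m - 1) with hBq
    have hBq0 : 0 < Bq := pow_pos (abs_pos.2 hxq) _
    have hpq : p ≠ q := fun h => hqp h.symm
    have hspmem : spike m n p q ∈ offRowSet m n p := spike_mem_offRowSet hm2 hpq
    set S : ℝ := betaMax B p - B (spike m n p q) with hS
    have hS0 : 0 ≤ S := spikeTerm_nonneg hm2 hqp
    set Rq : ℝ := DeltaSum B q with hRq
    have hRq0 : 0 ≤ Rq := DeltaSum_nonneg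
    set D : ℝ := DeltaSubSum B p q with hD
    -- row p estimate
    have rowp : (diagEntry B p - lam) * A ≤ S * Bq + D * A := by
      have e1 : |∑ α ∈ offRowSet m n p, B α * P α| = (diagEntry B p - lam) * A := by
        rw [hoff p, abs_mul, abs_of_nonpos (by linarith [hd p] : lam - diagEntry B p ≤ 0),
          abs_pow, hA]
        ring
      rw [← e1]
      calc |∑ α ∈ offRowSet m n p, B α * P α|
          ≤ ∑ α ∈ offRowSet m n p, |B α * P α| := Finset.abs_sum_le_sum_abs _ _
        _ = ∑ α ∈ (offRowSet m n p).erase (spike m n p q), |B α * P α|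
              + |B (spike m n p q) * P (spike m n p q)| :=
            (Finset.sum_erase_add _ _ hspmem).symm
        _ ≤ D * A + S * Bq := by
            gcongr
            · calc ∑ α ∈ (offRowSet m n p).erase (spike m n p q), |B α * P α|
                  ≤ ∑ α ∈ (offRowSet m n p).erase (spike m n p q), |B α| * A := by
                    refine Finset.sum_le_sum fun α hα => ?_
                    rw [abs_mul]
                    exact mul_le_mul_of_nonneg_left (htp α) (abs_nonneg _)
                _ = D * A := by
                    rw [← Finset.sum_mul]
                    congr 1
                    rw [hD, DeltaSubSum_eq hm2 hqp]
                    exact Finset.sum_congr rfl fun α hα =>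
                      (habsB p α (Finset.mem_of_mem_erase hα)).trans rfl
            · rw [abs_mul]
              have hPsp : P (spike m n p q) = x q ^ (m - 1) := by
                rw [hP]; exact tailProd_spike hm hpq
              rw [hPsp, abs_pow, ← hBq]
              have : |B (spike m n p q)| = S := by
                rw [hS]; exact habsB p _ hspmem
              rw [this]
        _ = S * Bq + D * A := by ring
    -- row q estimate
    have rowq : (diagEntry B q - lam) * Bq ≤ Rq * A := by
      have e1 : |∑ α ∈ offRowSet m n q, B α * P α| = (diagEntry B q - lam) * Bq := by
        rw [hoff q, abs_mul, abs_of_nonpos (by linarith [hd q] : lam - diagEntry B q ≤ 0),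
          abs_pow, hBq]
        ring
      rw [← e1]
      calc |∑ α ∈ offRowSet m n q, B α * P α|
          ≤ ∑ α ∈ offRowSet m n q, |B α * P α| := Finset.abs_sum_le_sum_abs _ _
        _ ≤ ∑ α ∈ offRowSet m n q, |B α| * A := by
            refine Finset.sum_le_sum fun α hα => ?_
            rw [abs_mul]
            exact mul_le_mul_of_nonneg_left (htp α) (abs_nonneg _)
        _ = Rq * A := by
            rw [← Finset.sum_mul]
            congr 1
            rw [hRq, DeltaSum]
            exact Finset.sum_congr rfl fun α hα => habsB q α hα
    -- the quasi-double condition for the pair (q, p)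
    have cond : S * Rq
        < (diagEntry B q - betaMax B q) * (diagEntry B p - betaMax B p - D) :=
      hB.2 q p hqp
    rw [hbeta q, hbeta p] at cond
    simp only [sub_zero] at cond
    -- cond : S * Rq < diagEntry B q * (diagEntry B p - D)
    have hU0 : 0 < diagEntry B p - D := by
      nlinarith [hd q, mul_nonneg hS0 hRq0]
    have rowp' : ((diagEntry B p - D) - lam) * A ≤ S * Bq := by nlinarith [rowp]
    have key : (((diagEntry B p - D) - lam) * A) * ((diagEntry B q - lam) * Bq)
        ≤ (S * Bq) * (Rq * A) := by
      refine mul_le_mul rowp' rowq ?_ (mul_nonneg hS0 hBq0.le)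
      exact mul_nonneg (by linarith [hd q]) hBq0.le
    have key2 : ((diagEntry B p - D) - lam) * (diagEntry B q - lam) ≤ S * Rq := by
      nlinarith [key, mul_pos hA0 hBq0]
    nlinarith [cond, key2, hd q, hU0, hpos]
end ZCase
section Variational

open Finset

variable {m n : ℕ}

/-- Key symmetry reindexing: each "slot" derivative sum equals `rowApply`. -/
lemma sum_deriv_row (hm : 0 < m) {C : (Fin m → Fin n) → ℝ} (hsym : IsSymmetricTensor C)
    (z : Fin n → ℝ) (k : Fin n) (t : Fin m) :
    ∑ α : Fin m → Fin n, C α * (if α t = k then ∏ j ∈ univ.erase t, z (α j) else 0)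
      = rowApply C z k := by
  classical
  set σ : Equiv.Perm (Fin m) := Equiv.swap ⟨0, hm⟩ t with hσ
  have hσ0 : σ ⟨0, hm⟩ = t := Equiv.swap_apply_left _ _
  have key : ∀ α : Fin m → Fin n,
      C α * (if α t = k then ∏ j ∈ univ.erase t, z (α j) else 0)
      = C (α ∘ σ) * (if (α ∘ σ) ⟨0, hm⟩ = k
          then ∏ j ∈ univ.erase (⟨0, hm⟩ : Fin m), z ((α ∘ σ) j) else 0) := by
    intro α
    rw [hsym σ α]
    have h1 : (α ∘ σ) ⟨0, hm⟩ = α t := by rw [Function.comp_apply, hσ0]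
    rw [h1]
    congr 1
    by_cases hcond : α t = k
    · simp only [hcond, if_true]
      refine Finset.prod_equiv σ.symm ?_ ?_
      · intro j
        simp only [Finset.mem_erase, Finset.mem_univ, and_true]
        constructor
        · intro hj h0
          apply hj
          have : j = σ ⟨0, hm⟩ := by rw [← h0, Equiv.apply_symm_apply]
          rw [this, hσ0]
        · intro hj hjt
          apply hj
          rw [hjt, ← hσ0, Equiv.symm_apply_apply]
      · intro j _
        rw [Function.comp_apply, Equiv.apply_symm_apply]
    · simp [hcond]
  have hbij : Function.Bijective (fun α : Fin m → Fin n => α ∘ ⇑σ) := by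
    constructor
    · intro a b h
      funext u
      have := congrFun h (σ.symm u)
      simpa using this
    · intro β
      exact ⟨β ∘ ⇑σ.symm, funext fun u => by simp⟩
  calc ∑ α : Fin m → Fin n, C α * (if α t = k then ∏ j ∈ univ.erase t, z (α j) else 0)
      = ∑ α : Fin m → Fin n, C (α ∘ σ) * (if (α ∘ σ) ⟨0, hm⟩ = k
          then ∏ j ∈ univ.erase (⟨0, hm⟩ : Fin m), z ((α ∘ σ) j) else 0) :=
        Finset.sum_congr rfl fun α _ => key α
    _ = ∑ β : Fin m → Fin n, C β * (if β ⟨0, hm⟩ = k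
          then ∏ j ∈ univ.erase (⟨0, hm⟩ : Fin m), z (β j) else 0) :=
        Fintype.sum_bijective (fun α : Fin m → Fin n => α ∘ ⇑σ) hbij _ _ (fun α => rfl)
    _ = rowApply C z k := by
        rw [rowApply, rowSet_eq_filter hm]
        rw [Finset.sum_filter]
        refine Finset.sum_congr rfl fun β _ => ?_
        rw [← filter_ne_zero_eq_erase hm]
        by_cases hcond : β ⟨0, hm⟩ = k <;> simp [hcond]

/-- If an even-order symmetric tensor takes a nonpositive value somewhere (on a
nonzero vector), it has a nonpositive H-eigenvalue. -/
lemma exists_nonpos_eigenvalue (hm2 : 2 ≤ m) (hme : Even m)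
    {C : (Fin m → Fin n) → ℝ} (hsym : IsSymmetricTensor C)
    {x₀ : Fin n → ℝ} (hx0 : x₀ ≠ 0) (hle : tensorApply C x₀ ≤ 0) :
    ∃ lam : ℝ, lam ≤ 0 ∧ IsHEigenvalue C lam := by
  classical
  have hm : 0 < m := by omega
  set g : (Fin n → ℝ) → ℝ := fun x => ∑ k, x k ^ m with hgdef
  have hgcont : Continuous g :=
    continuous_finset_sum _ fun k _ => (continuous_apply k).pow m
  set Sph : Set (Fin n → ℝ) := {x | g x = 1} with hSph
  have hclosed : IsClosed Sph := isClosed_eq hgcont continuous_const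
  have hbounded : Bornology.IsBounded Sph := by
    apply (Metric.isBounded_closedBall (x := (0 : Fin n → ℝ)) (r := 1)).subset
    intro x hxS
    have hxg : ∑ k, x k ^ m = 1 := hxS
    have hterm : ∀ k, x k ^ m ≤ 1 := by
      intro k
      calc x k ^ m ≤ ∑ k', x k' ^ m :=
            Finset.single_le_sum (fun k' _ => hme.pow_nonneg (x k')) (mem_univ k)
        _ = 1 := hxg
    rw [Metric.mem_closedBall, dist_zero_right]
    rw [pi_norm_le_iff_of_nonneg (by norm_num)]
    intro k
    rw [Real.norm_eq_abs]
    have h1 : |x k| ^ m ≤ 1 := by rw [hme.pow_abs]; exact hterm k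
    exact (pow_le_one_iff_of_nonneg (abs_nonneg _) (by omega)).1 h1
  have hcomp : IsCompact Sph := Metric.isCompact_of_isClosed_isBounded hclosed hbounded
  -- normalize x₀ to a point of the sphere with nonpositive value
  have hT : 0 < ∑ k, x₀ k ^ m := sum_pow_pos hm hme hx0
  set c : ℝ := (∑ k, x₀ k ^ m) ^ (-(1:ℝ)/m) with hc
  have hc0 : 0 < c := Real.rpow_pos_of_pos hT _
  have hcm : c ^ m = (∑ k, x₀ k ^ m)⁻¹ := by
    rw [hc, ← Real.rpow_natCast ((∑ k, x₀ k ^ m) ^ (-(1:ℝ)/m)) m, ← Real.rpow_mul hT.le]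
    rw [show (-(1:ℝ)/m) * m = -1 by field_simp]
    exact Real.rpow_neg_one _
  have hyS : (c • x₀) ∈ Sph := by
    show g (c • x₀) = 1
    have : ∀ k, (c • x₀) k ^ m = c ^ m * x₀ k ^ m := fun k => by
      simp [mul_pow]
    simp only [hgdef, this]
    rw [← Finset.mul_sum, hcm]
    exact inv_mul_cancel₀ hT.ne'
  have hfy : tensorApply C (c • x₀) ≤ 0 := by
    rw [tensorApply_smul]
    have h1 : 0 < c ^ m := pow_pos hc0 m
    nlinarith
  have hfc : Continuous (tensorApply C) :=
    continuous_finset_sum _ fun α _ =>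
      continuous_const.mul (continuous_finset_prod _ fun t _ => continuous_apply (α t))
  obtain ⟨z, hzS, hzmin⟩ := hcomp.exists_isMinOn ⟨c • x₀, hyS⟩ hfc.continuousOn
  have hgz : g z = 1 := hzS
  have hfz : tensorApply C z ≤ 0 := le_trans (isMinOn_iff.1 hzmin _ hyS) hfy
  have hz0 : z ≠ 0 := by
    intro h
    rw [h] at hgz
    simp only [hgdef, Pi.zero_apply, zero_pow hm.ne', Finset.sum_const_zero] at hgz
    exact zero_ne_one hgz
  -- derivatives
  set D : (Fin m → Fin n) → (Fin n → ℝ) →L[ℝ] ℝ := fun α =>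
    ∑ t : Fin m, (∏ j ∈ univ.erase t, z (α j)) •
      (ContinuousLinearMap.proj (R := ℝ) (φ := fun _ : Fin n => ℝ) (α t)) with hD
  set f' : (Fin n → ℝ) →L[ℝ] ℝ := ∑ α : Fin m → Fin n, C α • D α with hf'
  set g' : (Fin n → ℝ) →L[ℝ] ℝ := ∑ k : Fin n, D (fun _ => k) with hg'
  have hDstrict : ∀ α : Fin m → Fin n,
      HasStrictFDerivAt (fun x : Fin n → ℝ => ∏ t, x (α t)) (D α) z := by
    intro α
    exact HasStrictFDerivAt.finset_prod
      (u := (univ : Finset (Fin m)))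
      (g := fun t (x : Fin n → ℝ) => x (α t))
      (g' := fun t => ContinuousLinearMap.proj (R := ℝ) (φ := fun _ : Fin n => ℝ) (α t))
      (fun t _ =>
        (ContinuousLinearMap.proj (R := ℝ) (φ := fun _ : Fin n => ℝ) (α t)).hasStrictFDerivAt)
  have hfder : HasStrictFDerivAt (tensorApply C) f' z := by
    have : HasStrictFDerivAt (fun x : Fin n → ℝ => ∑ α : Fin m → Fin n, C α * ∏ t, x (α t))
        (∑ α : Fin m → Fin n, C α • D α) z :=
      HasStrictFDerivAt.fun_sum fun α _ => (hDstrict α).const_mul (C α)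
    exact this
  have hgder : HasStrictFDerivAt g g' z := by
    have h1 : HasStrictFDerivAt (fun x : Fin n → ℝ => ∑ k, ∏ _t : Fin m, x k)
        (∑ k : Fin n, D (fun _ => k)) z :=
      HasStrictFDerivAt.fun_sum fun k _ =>
        HasStrictFDerivAt.finset_prod
          (u := (univ : Finset (Fin m)))
          (g := fun _ (x : Fin n → ℝ) => x k)
          (g' := fun _ => ContinuousLinearMap.proj (R := ℝ) (φ := fun _ : Fin n => ℝ) k)
          (fun _ _ =>
            (ContinuousLinearMap.proj (R := ℝ) (φ := fun _ : Fin n => ℝ) k).hasStrictFDerivAt)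
    have h2 : (fun x : Fin n → ℝ => ∑ k, ∏ _t : Fin m, x k) = g := by
      funext x
      exact Finset.sum_congr rfl fun k _ => by
        rw [Finset.prod_const, Finset.card_univ, Fintype.card_fin]
    rwa [h2] at h1
  -- Lagrange multipliers
  have hextr : IsLocalExtrOn (tensorApply C) {x | g x = g z} z := by
    have hmin : IsMinOn (tensorApply C) {x | g x = g z} z := by
      rw [hgz]; exact hzmin
    exact Or.inl hmin.localize
  obtain ⟨a, b, hab, heq⟩ := hextr.exists_multipliers_of_hasStrictFDerivAt_1d hgder hfder
  -- evaluate derivatives on basis vectors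
  have hDsingle : ∀ (α : Fin m → Fin n) (k : Fin n),
      D α (Pi.single k (1:ℝ))
        = ∑ t : Fin m, (if α t = k then ∏ j ∈ univ.erase t, z (α j) else 0) := by
    intro α k
    rw [hD]
    simp only
    rw [ContinuousLinearMap.sum_apply]
    refine Finset.sum_congr rfl fun t _ => ?_
    rw [ContinuousLinearMap.smul_apply, ContinuousLinearMap.proj_apply]
    rcases eq_or_ne (α t) k with h | h
    · rw [h]; simp
    · rw [if_neg h]; simp [Pi.single_eq_of_ne h]
  have hg'app : ∀ k, g' (Pi.single k (1:ℝ)) = (m : ℝ) * z k ^ (m - 1) := by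
    intro k
    rw [hg', ContinuousLinearMap.sum_apply]
    have h1 : ∀ k' : Fin n, D (fun _ => k') (Pi.single k (1:ℝ))
        = if k' = k then (m : ℝ) * z k ^ (m - 1) else 0 := by
      intro k'
      rw [hDsingle]
      rcases eq_or_ne k' k with h | h
      · subst h
        simp only [if_true]
        have : ∀ t : Fin m, (∏ j ∈ univ.erase t, z k') = z k' ^ (m - 1) := fun t => by
          rw [Finset.prod_const, Finset.card_erase_of_mem (mem_univ t), Finset.card_univ,
            Fintype.card_fin]
        simp only [this]
        rw [Finset.sum_const, Finset.card_univ, Fintype.card_fin, nsmul_eq_mul]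
      · simp [h]
    rw [Finset.sum_congr rfl fun k' _ => h1 k']
    simp
  have hf'app : ∀ k, f' (Pi.single k (1:ℝ)) = (m : ℝ) * rowApply C z k := by
    intro k
    rw [hf', ContinuousLinearMap.sum_apply]
    calc ∑ α : Fin m → Fin n, (C α • D α) (Pi.single k (1:ℝ))
        = ∑ α : Fin m → Fin n, ∑ t : Fin m,
            C α * (if α t = k then ∏ j ∈ univ.erase t, z (α j) else 0) := by
          refine Finset.sum_congr rfl fun α _ => ?_
          rw [ContinuousLinearMap.smul_apply, smul_eq_mul, hDsingle, Finset.mul_sum]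
      _ = ∑ t : Fin m, ∑ α : Fin m → Fin n,
            C α * (if α t = k then ∏ j ∈ univ.erase t, z (α j) else 0) := Finset.sum_comm
      _ = ∑ _t : Fin m, rowApply C z k :=
          Finset.sum_congr rfl fun t _ => sum_deriv_row hm hsym z k t
      _ = (m : ℝ) * rowApply C z k := by
          rw [Finset.sum_const, Finset.card_univ, Fintype.card_fin, nsmul_eq_mul]
  have happ : ∀ k, a * ((m : ℝ) * z k ^ (m - 1)) + b * ((m : ℝ) * rowApply C z k) = 0 := by
    intro k
    have := ContinuousLinearMap.ext_iff.1 heq (Pi.single k (1:ℝ))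
    rw [ContinuousLinearMap.add_apply, ContinuousLinearMap.smul_apply,
      ContinuousLinearMap.smul_apply, ContinuousLinearMap.zero_apply] at this
    rw [← hg'app k, ← hf'app k]
    simpa using this
  have hmne : (m : ℝ) ≠ 0 := Nat.cast_ne_zero.2 hm.ne'
  have hb : b ≠ 0 := by
    intro hb0
    have ha : a ≠ 0 := by
      intro ha0
      apply hab
      rw [ha0, hb0]; rfl
    apply hz0
    funext k
    have hk := happ k
    rw [hb0] at hk
    simp only [zero_mul, add_zero] at hk
    have : z k ^ (m - 1) = 0 := by
      rcases mul_eq_zero.1 hk with h | h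
      · exact absurd h ha
      · rcases mul_eq_zero.1 h with h' | h'
        · exact absurd h' hmne
        · exact h'
    exact pow_eq_zero_iff (by omega : m - 1 ≠ 0) |>.1 this
  have heig : ∀ k, rowApply C z k = (-a / b) * z k ^ (m - 1) := by
    intro k
    have hk := happ k
    have h2 : (m : ℝ) * (a * z k ^ (m - 1) + b * rowApply C z k) = 0 := by
      linear_combination hk
    have h3 : a * z k ^ (m - 1) + b * rowApply C z k = 0 := by
      rcases mul_eq_zero.1 h2 with h | h
      · exact absurd h hmne
      · exact h
    field_simp
    linear_combination h3
  refine ⟨-a / b, ?_, z, hz0, heig⟩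
  -- lam = tensorApply C z ≤ 0
  have h1 : ∑ k, z k * rowApply C z k = tensorApply C z := sum_mul_rowApply hm
  have h2 : ∑ k, z k * rowApply C z k = (-a / b) * ∑ k, z k ^ m := by
    rw [Finset.mul_sum]
    refine Finset.sum_congr rfl fun k _ => ?_
    rw [heig k]
    have hzz : z k * z k ^ (m - 1) = z k ^ m := by
      rw [← pow_succ']
      congr 1
      omega
    calc z k * ((-a / b) * z k ^ (m - 1)) = (-a / b) * (z k * z k ^ (m - 1)) := by ring
      _ = (-a / b) * z k ^ m := by rw [hzz]
  have h3 : (∑ k, z k ^ m) = 1 := hgz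
  rw [h3, mul_one] at h2
  linarith [hfz, h1, h2]

end Variational
section Decomp

open Finset
open scoped Classical

variable {m n : ℕ} {B : (Fin m → Fin n) → ℝ} {i j : Fin n}

/-- By symmetry, a positive off-diagonal entry forces each of its indices to
have a positive `β`. -/
lemma betaMax_pos_of_entry (hm : 0 < m) (hsym : IsSymmetricTensor B)
    {α : Fin m → Fin n} (hα : α ∈ offRowSet m n i) (hpos : 0 < B α) (t : Fin m) :
    0 < betaMax B (α t) := by
  obtain ⟨h1, h2⟩ := mem_offRowSet.1 hα
  set σ : Equiv.Perm (Fin m) := Equiv.swap ⟨0, hm⟩ t with hσ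
  have hβmem : (α ∘ σ) ∈ offRowSet m n (α t) := by
    rw [mem_offRowSet]
    constructor
    · intro s hs
      have hs' : s = ⟨0, hm⟩ := Fin.ext hs
      subst hs'
      rw [Function.comp_apply, hσ, Equiv.swap_apply_left]
    · intro hconst
      have hαconst : α = fun _ => α t := by
        funext u
        have := congrFun hconst (σ.symm u)
        simpa using this
      have hti : α t = i := by
        have := h1 ⟨0, hm⟩ rfl
        rw [← this]
        exact (congrFun hαconst ⟨0, hm⟩).symm
      apply h2
      rw [hαconst, hti]
  calc (0:ℝ) < B α := hpos
    _ = B (α ∘ σ) := (hsym σ α).symm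
    _ ≤ betaMax B (α t) := le_betaMax hβmem

/-- An even order symmetric quasi-double B-tensor is positive definite. -/
lemma qd_posdef (hm2 : 2 ≤ m) (hme : Even m) :
    ∀ (N : ℕ) (B : (Fin m → Fin n) → ℝ),
      (univ.filter fun i => 0 < betaMax B i).card ≤ N →
      IsSymmetricTensor B → IsQuasiDoubleBTensor B →
      ∀ x : Fin n → ℝ, x ≠ 0 → 0 < tensorApply B x := by
  have hm : 0 < m := by omega
  intro N
  induction N with
  | zero =>
    intro B hcard hsym hqd x hx
    have hz : ∀ i, betaMax B i = 0 := by
      intro i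
      by_contra hne
      have hpos : 0 < betaMax B i := lt_of_le_of_ne betaMax_nonneg (Ne.symm hne)
      have hmem : i ∈ univ.filter fun i => 0 < betaMax B i :=
        Finset.mem_filter.2 ⟨mem_univ i, hpos⟩
      have : (univ.filter fun i => 0 < betaMax B i).card = 0 := le_antisymm hcard (Nat.zero_le _)
      rw [Finset.card_eq_zero] at this
      rw [this] at hmem
      exact absurd hmem (Finset.notMem_empty i)
    have hzr : ∀ i : Fin n, ∀ α ∈ offRowSet m n i, B α ≤ 0 := fun i α hα => by
      have := le_betaMax (B := B) hα; rwa [hz i] at this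
    by_contra hle
    push_neg at hle
    obtain ⟨lam, hlam0, hlam⟩ := exists_nonpos_eigenvalue hm2 hme hsym hx hle
    have := zcase hm2 hqd hzr lam hlam
    linarith
  | succ N ih =>
    intro B hcard hsym hqd x hx
    set J : Finset (Fin n) := univ.filter fun i => 0 < betaMax B i with hJ
    have hJmem : ∀ i, i ∈ J ↔ 0 < betaMax B i := by
      intro i; rw [hJ, Finset.mem_filter]; simp
    by_cases hJe : J = ∅
    · refine ih B ?_ hsym hqd x hx
      rw [← hJ, hJe]
      simp
    · obtain ⟨i₀, hi₀J, hi₀min⟩ :=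
        Finset.exists_min_image J (betaMax B) (Finset.nonempty_of_ne_empty hJe)
      set h : ℝ := betaMax B i₀ with hh
      have hh0 : 0 < h := (hJmem i₀).1 hi₀J
      have hhle : ∀ i ∈ J, h ≤ betaMax B i := hi₀min
      set B' : (Fin m → Fin n) → ℝ := fun α => B α - h * epsTensor m n J α with hB'
      -- symmetry of B'
      have hsym' : IsSymmetricTensor B' := by
        intro σ α
        rw [hB']
        simp only
        rw [hsym σ α]
        have : epsTensor m n J (α ∘ σ) = epsTensor m n J α := by
          rw [epsTensor, epsTensor]
          have : (∀ t, (α ∘ σ) t ∈ J) ↔ ∀ t, α t ∈ J :=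
            ⟨fun H t => by simpa using H (σ.symm t), fun H t => H (σ t)⟩
          simp only [this]
        rw [this]
      -- epsilon vanishes on rows outside J
      have hepsrow : ∀ i, i ∉ J → ∀ α ∈ offRowSet m n i, epsTensor m n J α = 0 := by
        intro i hiJ α hα
        rw [epsTensor, if_neg]
        intro hall
        exact hiJ ((mem_offRowSet.1 hα).1 ⟨0, hm⟩ rfl ▸ hall ⟨0, hm⟩)
      -- nonpositive entries escape J
      have hentJ : ∀ i, ∀ α ∈ offRowSet m n i, 0 < B α → ∀ t, α t ∈ J := by
        intro i α hα hpos t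
        exact (hJmem (α t)).2 (betaMax_pos_of_entry hm hsym hα hpos t)
      -- betaMax of B'
      have hb' : ∀ i, betaMax B' i = betaMax B i - (if i ∈ J then h else 0) := by
        intro i
        by_cases hiJ : i ∈ J
        · rw [if_pos hiJ]
          have hle' : betaMax B' i ≤ betaMax B i - h := by
            refine betaMax_le (by linarith [hhle i hiJ]) fun α hα => ?_
            rw [hB']
            simp only
            rw [epsTensor]
            by_cases hall : ∀ t, α t ∈ J
            · rw [if_pos hall, mul_one]
              have := le_betaMax (B := B) hα
              linarith
            · rw [if_neg hall, mul_zero]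
              have hBα : B α ≤ 0 := by
                by_contra hgt
                push_neg at hgt
                exact hall (hentJ i α hα hgt)
              linarith [hhle i hiJ]
          have hge : betaMax B i - h ≤ betaMax B' i := by
            obtain ⟨α, hα, hαeq⟩ := exists_betaMax ((hJmem i).1 hiJ)
            have hall : ∀ t, α t ∈ J := hentJ i α hα (hαeq ▸ (hJmem i).1 hiJ)
            have : B' α = betaMax B i - h := by
              rw [hB']
              simp only
              rw [epsTensor, if_pos hall, mul_one, hαeq]
            calc betaMax B i - h = B' α := this.symm
              _ ≤ betaMax B' i := le_betaMax hα
          linarith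
        · rw [if_neg hiJ, sub_zero]
          rw [betaMax, betaMax]
          refine Finset.fold_congr fun α hα => ?_
          rw [hB']
          simp only
          rw [hepsrow i hiJ α hα, mul_zero, sub_zero]
      -- diagonal of B'
      have hd' : ∀ i, diagEntry B' i = diagEntry B i - (if i ∈ J then h else 0) := by
        intro i
        rw [diagEntry, diagEntry, hB']
        simp only
        rw [epsTensor]
        by_cases hiJ : i ∈ J
        · rw [if_pos hiJ, if_pos fun _ => hiJ, mul_one]
        · rw [if_neg hiJ, if_neg fun hall => hiJ (hall ⟨0, hm⟩), mul_zero, sub_zero]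
      -- the termwise inequality
      have hterm : ∀ i, ∀ α ∈ offRowSet m n i,
          betaMax B' i - B' α ≤ betaMax B i - B α := by
        intro i α hα
        rw [hb' i, hB']
        simp only
        rw [epsTensor]
        by_cases hall : ∀ t, α t ∈ J
        · have hiJ : i ∈ J := (mem_offRowSet.1 hα).1 ⟨0, hm⟩ rfl ▸ hall ⟨0, hm⟩
          rw [if_pos hall, if_pos hiJ, mul_one]
          linarith
        · rw [if_neg hall, mul_zero]
          by_cases hiJ : i ∈ J
          · rw [if_pos hiJ]; linarith
          · rw [if_neg hiJ]; linarith
      -- quasi-double property of B'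
      have hβd : ∀ i, diagEntry B' i - betaMax B' i = diagEntry B i - betaMax B i := by
        intro i; rw [hb' i, hd' i]; ring
      have hqd' : IsQuasiDoubleBTensor B' := by
        constructor
        · intro i
          have := hqd.1 i
          have h2 := hβd i
          linarith
        · intro i j hij
          have hDle : DeltaSum B' i ≤ DeltaSum B i :=
            Finset.sum_le_sum fun α hα => hterm i α hα
          have hspmem : spike m n j i ∈ offRowSet m n j :=
            spike_mem_offRowSet hm2 (Ne.symm hij)
          have hsple : betaMax B' j - B' (spike m n j i)
              ≤ betaMax B j - B (spike m n j i) := hterm j _ hspmem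
          have hDSle : DeltaSubSum B' j i ≤ DeltaSubSum B j i := by
            rw [DeltaSubSum_eq hm2 hij, DeltaSubSum_eq hm2 hij]
            exact Finset.sum_le_sum fun α hα =>
              hterm j α (Finset.mem_of_mem_erase hα)
          have hsp0 : 0 ≤ betaMax B' j - B' (spike m n j i) := spikeTerm_nonneg hm2 hij
          have hD0 : 0 ≤ DeltaSum B' i := DeltaSum_nonneg
          have hcond := hqd.2 i j hij
          have hpos1 : 0 < diagEntry B i - betaMax B i := sub_pos.2 (hqd.1 i)
          calc (betaMax B' j - B' (spike m n j i)) * DeltaSum B' i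
              ≤ (betaMax B j - B (spike m n j i)) * DeltaSum B i := by
                refine mul_le_mul hsple hDle hD0 ?_
                linarith [spikeTerm_nonneg (B := B) hm2 hij]
            _ < (diagEntry B i - betaMax B i)
                  * (diagEntry B j - betaMax B j - DeltaSubSum B j i) := hcond
            _ ≤ (diagEntry B' i - betaMax B' i)
                  * (diagEntry B' j - betaMax B' j - DeltaSubSum B' j i) := by
                rw [hβd i, hβd j]
                refine mul_le_mul_of_nonneg_left ?_ hpos1.le
                linarith
      -- the new J has smaller cardinality
      have hcard' : (univ.filter fun i => 0 < betaMax B' i).card ≤ N := by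
        have hsub : (univ.filter fun i => 0 < betaMax B' i) ⊆ J.erase i₀ := by
          intro i hi
          have hpos : 0 < betaMax B' i := (Finset.mem_filter.1 hi).2
          have hiJ : i ∈ J := by
            by_contra hiJ
            rw [hb' i, if_neg hiJ, sub_zero] at hpos
            exact hiJ ((hJmem i).2 hpos)
          refine Finset.mem_erase.2 ⟨?_, hiJ⟩
          intro hii₀
          subst hii₀
          rw [hb' i, if_pos hiJ, ← hh] at hpos
          linarith
        calc (univ.filter fun i => 0 < betaMax B' i).card
            ≤ (J.erase i₀).card := Finset.card_le_card hsub
          _ = J.card - 1 := Finset.card_erase_of_mem hi₀J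
          _ ≤ N := by
              have h1 : J.card ≤ N + 1 := hcard
              omega
      -- conclude
      have hih := ih B' hcard' hsym' hqd' x hx
      have hsplit : tensorApply B x = tensorApply B' x + h * (∑ k ∈ J, x k) ^ m := by
        have : B = fun α => B' α + h * epsTensor m n J α := by
          funext α; rw [hB']; ring
        rw [this]
        exact tensorApply_add_eps J h
      rw [hsplit]
      have : 0 ≤ h * (∑ k ∈ J, x k) ^ m :=
        mul_nonneg hh0.le (hme.pow_nonneg _)
      linarith

end Decomp
/-- every H-eigenvalue of an even order symmetric quasi-double
B-tensor is positive. -/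
theorem stmt17 (m n : ℕ) (hm : 0 < m) (hme : Even m) (hn : 2 ≤ n)
    (B : (Fin m → Fin n) → ℝ) (hsym : IsSymmetricTensor B)
    (hB : IsQuasiDoubleBTensor B) :
    ∀ lam : ℝ, IsHEigenvalue B lam → 0 < lam := by
  classical
  intro lam hlam
  obtain ⟨x, hx, heig⟩ := hlam
  have hm2 : 2 ≤ m := by
    obtain ⟨k, hk⟩ := hme
    omega
  have hpd : 0 < tensorApply B x :=
    qd_posdef hm2 hme _ B le_rfl hsym hB x hx
  have h1 : ∑ k, x k * rowApply B x k = tensorApply B x := sum_mul_rowApply hm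
  have h2 : ∑ k, x k * rowApply B x k = lam * ∑ k, x k ^ m := by
    rw [Finset.mul_sum]
    refine Finset.sum_congr rfl fun k _ => ?_
    rw [heig k]
    have hzz : x k * x k ^ (m - 1) = x k ^ m := by
      rw [← pow_succ']
      congr 1
      omega
    calc x k * (lam * x k ^ (m - 1)) = lam * (x k * x k ^ (m - 1)) := by ring
      _ = lam * x k ^ m := by rw [hzz]
  have hS : 0 < ∑ k, x k ^ m := sum_pow_pos hm hme hx
  have h3 : 0 < lam * ∑ k, x k ^ m := by rw [← h2, h1]; exact hpd
  by_contra hle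
  push_neg at hle
  nlinarith
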